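/- arXiv:2005.06109 — 2 statements merged into one kernel-verified Lean document; each statement's English description precedes it below -/
import Mathlib

section
/- For distinct indices $i, p, q$ and $\lambda \in \mathbb{R}^n$, one has $\sigma_{n-2}(\lambda|i)\sigma_{n-2}(\lambda|pq) - \sigma_{n-1}(\lambda|i)\sigma_{n-3}(\lambda|pq) = \sigma_{n-3}^2(\lambda|ipq)(\lambda_i\lambda_p + \lambda_i\lambda_q - \lambda_p\lambda_q)$. -/
/-!
Put `T = {i, p, q}ᶜ`, so `|T| = n - 3`. Pascal's rule
`σ_{k+1}(s ∪ {a}) = σ_{k+1}(s) + λ_a σ_k(s)`, together with `σ_k(s) = 0` for `k > |s|`,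
writes all four factors on the left in terms of `P = σ_{|T|}(T)` and `Q = σ_{|T|-1}(T)`:
the left side becomes `λ_i P (λ_p P + λ_q P + λ_p λ_q Q) - λ_p λ_q P (P + λ_i Q)`,
in which the `PQ` terms cancel.
-/

open Finset

/-- The `k`-th elementary symmetric polynomial of the values of `lam` on the index set `s`. -/
noncomputable def esym {n : ℕ} (k : ℕ) (s : Finset (Fin n)) (lam : Fin n → ℝ) : ℝ :=
  ∑ t ∈ s.powersetCard k, ∏ i ∈ t, lam i

namespace esym

variable {n : ℕ} {k : ℕ} {s : Finset (Fin n)} {lam : Fin n → ℝ}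

@[simp] lemma zero_left : esym 0 s lam = 1 := by simp [esym]

lemma eq_zero_of_card_lt (h : s.card < k) : esym k s lam = 0 := by
  simp [esym, powersetCard_eq_empty.2 h]

lemma insert_succ {a : Fin n} (ha : a ∉ s) :
    esym (k + 1) (insert a s) lam = esym (k + 1) s lam + lam a * esym k s lam := by
  have hdisj : Disjoint (s.powersetCard (k + 1)) ((s.powersetCard k).image (insert a)) := by
    simp only [disjoint_left, mem_powersetCard, mem_image]
    rintro _ ⟨hts, -⟩ ⟨u, -, rfl⟩
    exact ha (hts (mem_insert_self a u))
  have hinj : Set.InjOn (insert a) (s.powersetCard k : Set (Finset (Fin n))) :=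
    fun u hu v hv huv => by
      rw [← erase_insert (fun h => ha ((mem_powersetCard.1 hu).1 h)),
        ← erase_insert (fun h => ha ((mem_powersetCard.1 hv).1 h)), huv]
  rw [esym, powersetCard_succ_insert ha, sum_union hdisj, sum_image hinj, esym, esym, mul_sum]
  congr 1
  exact sum_congr rfl fun u hu => prod_insert fun h => ha ((mem_powersetCard.1 hu).1 h)

end esym

lemma esym_mul_sub_mul_insert {n : ℕ} (lam : Fin n → ℝ) (T : Finset (Fin n)) {i p q : Fin n}
    (hi : i ∉ T) (hp : p ∉ insert q T) (hq : q ∉ T) :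
    esym (T.card + 1) (insert p (insert q T)) lam * esym (T.card + 1) (insert i T) lam
      - esym (T.card + 2) (insert p (insert q T)) lam * esym T.card (insert i T) lam
      = esym T.card T lam ^ 2 * (lam i * lam p + lam i * lam q - lam p * lam q) := by
  have h1 : esym (T.card + 1) T lam = 0 := esym.eq_zero_of_card_lt (by omega)
  have h2 : esym (T.card + 2) T lam = 0 := esym.eq_zero_of_card_lt (by omega)
  simp only [esym.insert_succ hp, esym.insert_succ hq, esym.insert_succ hi, h1, h2]
  obtain h | ⟨k, hk⟩ : T.card = 0 ∨ ∃ k, T.card = k + 1 := by cases T.card <;> simp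
  · simp only [h, esym.zero_left]; ring
  · simp only [hk, esym.insert_succ hq, esym.insert_succ hi]; ring

theorem stmt0 {n : ℕ} (lam : Fin n → ℝ) (i p q : Fin n)
    (hip : i ≠ p) (hiq : i ≠ q) (hpq : p ≠ q) :
    esym (n-2) (({i} : Finset (Fin n))ᶜ) lam * esym (n-2) (({p, q} : Finset (Fin n))ᶜ) lam
      - esym (n-1) (({i} : Finset (Fin n))ᶜ) lam * esym (n-3) (({p, q} : Finset (Fin n))ᶜ) lam
      = (esym (n-3) (({i, p, q} : Finset (Fin n))ᶜ) lam) ^ 2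
          * (lam i * lam p + lam i * lam q - lam p * lam q) := by
  set T : Finset (Fin n) := {i, p, q}ᶜ with hT
  have hcard : T.card = n - 3 := by
    rw [hT, card_compl, card_insert_of_notMem (by simp [hip, hiq]),
      card_insert_of_notMem (by simp [hpq]), card_singleton, Fintype.card_fin]
  have h3 : 3 ≤ n := by
    simpa [card_insert_of_notMem, hip, hiq, hpq] using card_le_univ ({i, p, q} : Finset (Fin n))
  have hcompl_i : ({i} : Finset (Fin n))ᶜ = insert p (insert q T) := by
    ext x; simp only [hT, mem_compl, mem_insert, mem_singleton]; grind
  have hcompl_pq : ({p, q} : Finset (Fin n))ᶜ = insert i T := by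
    ext x; simp only [hT, mem_compl, mem_insert, mem_singleton]; grind
  obtain ⟨hn2, hn1⟩ : n - 2 = T.card + 1 ∧ n - 1 = T.card + 2 := by omega
  rw [hcompl_i, hcompl_pq, hn1, hn2, ← hcard]
  exact esym_mul_sub_mul_insert lam T (by simp [hT]) (by simp [hT, hpq]) (by simp [hT])
end

section
/- Let $S = (s_{pq})_{2\le p,q\le n}$ with $s_{pp} = 2\sigma_{n-2}(\lambda|1) + 2\sigma_{n-2}(\lambda|p)$ and $s_{pq} = \sigma_{n-2}(\lambda|1) + (\lambda_p + \lambda_q - 2\lambda_1)\sigma_{n-3}(\lambda|1pq)$ for $p\neq q$. If $\lambda \in \Gamma_{n-1}$, $\sigma_{n-1}(\lambda) = 1$, and $\lambda_1 \le 0$, then the quadratic form $Q_S(\xi) = \sum_{p,q} s_{pq}\xi_p\xi_q \ge 0$ for all $\xi \in \mathbb{R}^{n-1}$, i.e., $S$ is positive semidefinite. -/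
/-!
Put `g x = ∏ i, (λ i + x) = ∑ k, σ_k(λ) x ^ (n - k)`. For `λ ∈ Γ_{n-1}` all coefficients except
`σ_n` are nonnegative, so `g x - g u ≥ σ_{n-1}(λ) (x - u)` for `0 ≤ u ≤ x`: on `[0, ∞)` the
polynomial `g` has at most one root, and that root is simple. As `-λ_1 ≥ 0` is a root, no other
`λ_j` is `≤ 0`.

With `P = ∏_{j ≥ 2} λ_j`, `μ_j = 1 / λ_j` and `A = ∑ μ_j`, every entry of `S` is `P` times a
polynomial in `μ` and `λ_1`, and `σ_{n-1}(λ) = P (1 + λ_1 A) = 1` forces `1 + λ_1 A > 0`.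
Writing `X = ∑ ξ`, `Y = ∑ μ ξ`, `B = ∑ ξ²`, `C = ∑ μ ξ²`,
`A Q_S(ξ) / P = (A X + Y)² + (A² B + Y² - 2 A C) + 2 (1 + λ_1 A) (A C - Y²)`,
where `A C ≥ Y²` is Cauchy–Schwarz and `A² B + Y² ≥ 2 A C` follows from
`(A - μ_p)² ≥ ∑_{q ≠ p} μ_q²`.
-/

open Finset

section Esym

variable {n : ℕ} (lam : Fin n → ℝ)

lemma esym_card (s : Finset (Fin n)) : esym s.card s lam = ∏ i ∈ s, lam i := by
  rw [esym, powersetCard_self, sum_singleton]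

lemma powersetCard_card_sub_one {α : Type*} [DecidableEq α] (s : Finset α) (hs : s.Nonempty) :
    s.powersetCard (s.card - 1) = s.image s.erase := by
  ext t
  simp only [mem_powersetCard, mem_image]
  constructor
  · rintro ⟨hts, hcard⟩
    obtain ⟨a, hat, rfl⟩ := exists_eq_insert_iff.2 ⟨hts, by have := hs.card_pos; omega⟩
    exact ⟨a, mem_insert_self a t, erase_insert hat⟩
  · rintro ⟨a, ha, rfl⟩
    exact ⟨erase_subset a s, card_erase_of_mem ha⟩

lemma esym_card_sub_one (s : Finset (Fin n)) (hs : s.Nonempty) :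
    esym (s.card - 1) s lam = ∑ a ∈ s, ∏ i ∈ s.erase a, lam i := by
  rw [esym, powersetCard_card_sub_one s hs, sum_image]
  intro a ha b hb hab
  by_contra hne
  exact notMem_erase b s (hab ▸ mem_erase.2 ⟨Ne.symm hne, hb⟩)

lemma prod_erase_eq_mul_inv {s : Finset (Fin n)} {a : Fin n} (ha : a ∈ s) (hlam : lam a ≠ 0) :
    ∏ i ∈ s.erase a, lam i = (∏ i ∈ s, lam i) * (lam a)⁻¹ := by
  rw [← mul_prod_erase s lam ha]
  field_simp

variable {lam}

lemma esym_card_sub_one_eq_prod_mul_sum_inv {s : Finset (Fin n)} (hs : s.Nonempty)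
    (hlam : ∀ a ∈ s, lam a ≠ 0) :
    esym (s.card - 1) s lam = (∏ i ∈ s, lam i) * ∑ a ∈ s, (lam a)⁻¹ := by
  rw [esym_card_sub_one lam s hs, mul_sum]
  exact sum_congr rfl fun a ha => prod_erase_eq_mul_inv lam ha (hlam a ha)

lemma esym_card_insert {s : Finset (Fin n)} {a : Fin n} (ha : a ∉ s) (hlam : ∀ b ∈ s, lam b ≠ 0) :
    esym s.card (insert a s) lam = (∏ i ∈ s, lam i) * (1 + lam a * ∑ b ∈ s, (lam b)⁻¹) := by
  have hcard : s.card = (insert a s).card - 1 := by rw [card_insert_of_notMem ha]; rfl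
  rw [hcard, esym_card_sub_one lam _ (insert_nonempty a s), sum_insert ha, erase_insert ha,
    mul_add, mul_one, mul_sum, mul_sum]
  congr 1
  refine sum_congr rfl fun b hb => ?_
  have hba : b ≠ a := fun h => ha (h ▸ hb)
  rw [erase_insert_of_ne (Ne.symm hba), prod_insert (fun h => ha (mem_of_mem_erase h)),
    prod_erase_eq_mul_inv lam hb (hlam b hb)]
  ring

end Esym

def InGardingCone {n : ℕ} (k : ℕ) (lam : Fin n → ℝ) : Prop :=
  ∀ m : ℕ, 1 ≤ m → m ≤ k → 0 < esym m univ lam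

section Cone

variable {n : ℕ} {lam : Fin n → ℝ}

lemma prod_add_eq_sum_esym (lam : Fin n → ℝ) (x : ℝ) :
    ∏ i, (lam i + x) = ∑ k ∈ range (n + 1), esym k univ lam * x ^ (n - k) := by
  rw [prod_add, powerset_card_disjiUnion]
  refine (sum_disjiUnion _ _ _).trans (sum_congr (by rw [card_univ, Fintype.card_fin]) ?_)
  intro k _
  rw [esym, sum_mul]
  refine sum_congr rfl fun t ht => ?_
  obtain ⟨hsub, hcard⟩ := mem_powersetCard.1 ht
  rw [prod_const, card_sdiff_of_subset hsub, card_univ, Fintype.card_fin, hcard]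

lemma esym_mul_sub_le_prod_add_sub (hΓ : InGardingCone (n - 1) lam) (hn : 1 ≤ n)
    {u x : ℝ} (hu : 0 ≤ u) (hux : u ≤ x) :
    esym (n - 1) univ lam * (x - u) ≤ ∏ i, (lam i + x) - ∏ i, (lam i + u) := by
  rw [prod_add_eq_sum_esym, prod_add_eq_sum_esym, ← sum_sub_distrib]
  have hterm : ∀ k ∈ range (n + 1),
      0 ≤ esym k univ lam * x ^ (n - k) - esym k univ lam * u ^ (n - k) := by
    intro k hk
    rw [← mul_sub]
    rcases (Nat.lt_succ_iff.1 (mem_range.1 hk)).lt_or_eq with hkn | rfl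
    · refine mul_nonneg ?_ (sub_nonneg.2 (pow_le_pow_left₀ hu hux _))
      rcases Nat.eq_zero_or_pos k with rfl | hk0
      · simp [esym]
      · exact (hΓ k hk0 (by omega)).le
    · simp
  have hsingle := single_le_sum hterm (mem_range.2 (by omega : n - 1 < n + 1))
  rwa [show n - (n - 1) = 1 by omega, pow_one, pow_one, ← mul_sub] at hsingle

lemma esym_le_prod_erase_add (hΓ : InGardingCone (n - 1) lam) {i : Fin n} (hi : lam i ≤ 0)
    {x : ℝ} (hx : -lam i ≤ x) : esym (n - 1) univ lam ≤ ∏ k ∈ univ.erase i, (lam k + x) := by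
  have hopen :
      Set.Ioi (-lam i) ⊆ {x | esym (n - 1) univ lam ≤ ∏ k ∈ univ.erase i, (lam k + x)} := by
    intro x (hx : -lam i < x)
    have hgrow := esym_mul_sub_le_prod_add_sub hΓ (Fin.pos i) (neg_nonneg.2 hi) hx.le
    have hroot : ∏ k, (lam k + -lam i) = 0 := prod_eq_zero (mem_univ i) (add_neg_cancel _)
    rw [hroot, sub_zero, ← mul_prod_erase _ _ (mem_univ i), show lam i + x = x - -lam i by ring,
      mul_comm] at hgrow
    exact le_of_mul_le_mul_left hgrow (sub_pos.2 hx)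
  have hclosed : IsClosed {x | esym (n - 1) univ lam ≤ ∏ k ∈ univ.erase i, (lam k + x)} :=
    isClosed_le continuous_const (by fun_prop)
  exact hclosed.closure_subset_iff.2 hopen (closure_Ioi (-lam i) ▸ hx)

lemma pos_of_ne_of_nonpos (hΓ : InGardingCone (n - 1) lam) {i j : Fin n} (hi : lam i ≤ 0)
    (hji : j ≠ i) : 0 < lam j := by
  by_contra! hj
  wlog hij : lam j ≤ lam i generalizing i j
  · exact this hj (Ne.symm hji) hi (le_of_not_ge hij)
  have hn : 2 ≤ n := by have := Fin.val_ne_of_ne hji; omega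
  have hle := esym_le_prod_erase_add hΓ hi (x := -lam j) (by linarith)
  rw [prod_eq_zero (mem_erase.2 ⟨hji, mem_univ j⟩) (add_neg_cancel _)] at hle
  exact (hΓ (n - 1) (by omega) le_rfl).not_ge hle

end Cone

lemma quadratic_nonneg {A B C X Y a : ℝ} (hA : 0 < A) (hCS : Y ^ 2 ≤ A * C)
    (hkey : 2 * (A * C) ≤ A ^ 2 * B + Y ^ 2) (ha : 0 ≤ 1 + a * A) :
    0 ≤ A * X ^ 2 + 2 * X * Y - 2 * a * Y ^ 2 + A * B + 2 * a * A * C := by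
  refine nonneg_of_mul_nonneg_right ?_ hA
  have hsplit : A * (A * X ^ 2 + 2 * X * Y - 2 * a * Y ^ 2 + A * B + 2 * a * A * C)
      = (A * X + Y) ^ 2 + (A ^ 2 * B + Y ^ 2 - 2 * (A * C))
        + 2 * (1 + a * A) * (A * C - Y ^ 2) := by
    ring
  rw [hsplit]
  have := mul_nonneg ha (sub_nonneg.2 hCS)
  linarith [sq_nonneg (A * X + Y)]

section QuadraticForm

variable {ι : Type*} [DecidableEq ι] (T : Finset ι) (μ ξ : ι → ℝ)

lemma two_mul_sum_sq_mul_sq_le :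
    2 * ∑ p ∈ T, μ p ^ 2 * ξ p ^ 2
      ≤ (∑ p ∈ T, μ p ^ 2) * (∑ p ∈ T, ξ p ^ 2) + (∑ p ∈ T, μ p * ξ p) ^ 2 := by
  have hfull : ∑ p ∈ T, ∑ q ∈ T, (μ q * ξ p + μ p * ξ q) ^ 2
      = 2 * ((∑ p ∈ T, μ p ^ 2) * (∑ p ∈ T, ξ p ^ 2) + (∑ p ∈ T, μ p * ξ p) ^ 2) := by
    have hexpand : ∀ p q, (μ q * ξ p + μ p * ξ q) ^ 2
        = ξ p ^ 2 * μ q ^ 2 + 2 * (μ p * ξ p) * (μ q * ξ q) + μ p ^ 2 * ξ q ^ 2 := fun p q => by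
      ring
    simp only [hexpand, sum_add_distrib, ← mul_sum, ← sum_mul]
    ring
  have hdiag : ∑ p ∈ T, ∑ q ∈ T, (μ q * ξ p + μ p * ξ q) ^ 2
      = 4 * ∑ p ∈ T, μ p ^ 2 * ξ p ^ 2
        + ∑ p ∈ T, ∑ q ∈ T.erase p, (μ q * ξ p + μ p * ξ q) ^ 2 := by
    rw [mul_sum, ← sum_add_distrib]
    refine sum_congr rfl fun p hp => ?_
    rw [← add_sum_erase _ _ hp]
    ring
  have hoff : 0 ≤ ∑ p ∈ T, ∑ q ∈ T.erase p, (μ q * ξ p + μ p * ξ q) ^ 2 :=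
    sum_nonneg fun p _ => sum_nonneg fun q _ => sq_nonneg _
  linarith

def muEntry (a : ℝ) (p q : ι) : ℝ :=
  if p = q then 2 * ∑ r ∈ T, μ r + 2 * μ p * (1 + a * (∑ r ∈ T, μ r - μ p))
  else ∑ r ∈ T, μ r + μ p + μ q - 2 * a * μ p * μ q

lemma sum_muEntry_mul_mul (a : ℝ) :
    ∑ p ∈ T, ∑ q ∈ T, muEntry T μ a p q * ξ p * ξ q
      = (∑ p ∈ T, μ p) * (∑ p ∈ T, ξ p) ^ 2
        + 2 * (∑ p ∈ T, ξ p) * (∑ p ∈ T, μ p * ξ p) - 2 * a * (∑ p ∈ T, μ p * ξ p) ^ 2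
        + (∑ p ∈ T, μ p) * (∑ p ∈ T, ξ p ^ 2)
        + 2 * a * (∑ p ∈ T, μ p) * (∑ p ∈ T, μ p * ξ p ^ 2) := by
  set A := ∑ r ∈ T, μ r
  have hsplit : ∀ p q, muEntry T μ a p q * ξ p * ξ q
      = A * ξ p * ξ q + (μ p * ξ p) * ξ q + ξ p * (μ q * ξ q) - 2 * a * (μ p * ξ p) * (μ q * ξ q)
        + if p = q then A * ξ p ^ 2 + 2 * a * A * (μ p * ξ p ^ 2) else 0 := by
    intro p q
    unfold muEntry
    split_ifs with hpq
    · subst hpq; ring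
    · ring
  simp only [hsplit, sum_add_distrib, sum_sub_distrib, sum_ite_eq, sum_ite_mem, inter_self,
    ← mul_sum, ← sum_mul]
  ring

variable {μ}

lemma two_mul_sum_mul_sum_le (hμ : ∀ p ∈ T, 0 ≤ μ p) :
    2 * ((∑ p ∈ T, μ p) * ∑ p ∈ T, μ p * ξ p ^ 2)
      ≤ (∑ p ∈ T, μ p) ^ 2 * (∑ p ∈ T, ξ p ^ 2) + (∑ p ∈ T, μ p * ξ p) ^ 2 := by
  have hcoeff : ∀ p ∈ T, ∑ q ∈ T, μ q ^ 2 - 2 * μ p ^ 2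
      ≤ (∑ q ∈ T, μ q) ^ 2 - 2 * (∑ q ∈ T, μ q) * μ p := by
    intro p hp
    have := sum_sq_le_sq_sum_of_nonneg (s := T.erase p) (fun q hq => hμ q (mem_of_mem_erase hq))
    rw [sum_erase_eq_sub hp, sum_erase_eq_sub hp] at this
    linarith
  have hdiag : ∑ p ∈ T, (∑ q ∈ T, μ q ^ 2 - 2 * μ p ^ 2) * ξ p ^ 2
      ≤ ∑ p ∈ T, ((∑ q ∈ T, μ q) ^ 2 - 2 * (∑ q ∈ T, μ q) * μ p) * ξ p ^ 2 :=
    sum_le_sum fun p hp => mul_le_mul_of_nonneg_right (hcoeff p hp) (sq_nonneg _)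
  simp only [sub_mul, sum_sub_distrib, ← mul_sum, mul_assoc] at hdiag
  linarith [two_mul_sum_sq_mul_sq_le T μ ξ]

lemma muEntry_form_nonneg {a : ℝ} (hμ : ∀ p ∈ T, 0 ≤ μ p) (hA : 0 < ∑ p ∈ T, μ p)
    (ha : 0 ≤ 1 + a * ∑ p ∈ T, μ p) :
    0 ≤ ∑ p ∈ T, ∑ q ∈ T, muEntry T μ a p q * ξ p * ξ q := by
  rw [sum_muEntry_mul_mul]
  exact quadratic_nonneg hA (sum_sq_le_sum_mul_sum_of_sq_le_mul T hμ
    (fun p hp => mul_nonneg (hμ p hp) (sq_nonneg _)) (fun p _ => le_of_eq (by ring)))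
    (two_mul_sum_mul_sum_le T ξ hμ) ha

end QuadraticForm

section HessianEntries

variable {n : ℕ} {lam : Fin n → ℝ} {i₀ : Fin n}

noncomputable def sEntry (lam : Fin n → ℝ) (i₀ p q : Fin n) : ℝ :=
  if p = q then
    2 * esym (n - 2) ({i₀} : Finset (Fin n))ᶜ lam + 2 * esym (n - 2) ({p} : Finset (Fin n))ᶜ lam
  else
    esym (n - 2) ({i₀} : Finset (Fin n))ᶜ lam
      + (lam p + lam q - 2 * lam i₀) * esym (n - 3) ({i₀, p, q} : Finset (Fin n))ᶜ lam

lemma sEntry_eq (hpos : ∀ r ∈ ({i₀} : Finset (Fin n))ᶜ, 0 < lam r) {p q : Fin n}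
    (hp : p ∈ ({i₀} : Finset (Fin n))ᶜ) (hq : q ∈ ({i₀} : Finset (Fin n))ᶜ) :
    sEntry lam i₀ p q = (∏ r ∈ ({i₀} : Finset (Fin n))ᶜ, lam r)
      * muEntry ({i₀} : Finset (Fin n))ᶜ (fun r => (lam r)⁻¹) (lam i₀) p q := by
  set T : Finset (Fin n) := {i₀}ᶜ with hT
  have hne : ∀ r ∈ T, lam r ≠ 0 := fun r hr => (hpos r hr).ne'
  have hcard : T.card = n - 1 := by rw [card_compl, card_singleton, Fintype.card_fin]
  have hpi : p ≠ i₀ := by simpa [hT] using hp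
  have hi₀ : i₀ ∉ T.erase p := fun h => by simpa [hT] using mem_of_mem_erase h
  have hσi₀ : esym (n - 2) T lam = (∏ r ∈ T, lam r) * ∑ r ∈ T, (lam r)⁻¹ := by
    rw [show n - 2 = T.card - 1 by omega]
    exact esym_card_sub_one_eq_prod_mul_sum_inv ⟨p, hp⟩ hne
  have hσp : esym (n - 2) ({p} : Finset (Fin n))ᶜ lam = (∏ r ∈ T, lam r) * (lam p)⁻¹
      * (1 + lam i₀ * (∑ r ∈ T, (lam r)⁻¹ - (lam p)⁻¹)) := by
    have hcompl : ({p} : Finset (Fin n))ᶜ = insert i₀ (T.erase p) := by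
      ext r; rcases eq_or_ne r i₀ with rfl | hr <;> simp [*, Ne.symm hpi]
    rw [hcompl, show n - 2 = (T.erase p).card by rw [card_erase_of_mem hp]; omega,
      esym_card_insert hi₀ fun r hr => hne r (mem_of_mem_erase hr),
      prod_erase_eq_mul_inv lam hp (hne p hp), sum_erase_eq_sub hp]
  unfold sEntry muEntry
  split_ifs with hpq
  · subst hpq
    rw [← hT, hσi₀, hσp]
    ring
  · have hσpq : esym (n - 3) ({i₀, p, q} : Finset (Fin n))ᶜ lam
        = (∏ r ∈ T, lam r) * (lam p)⁻¹ * (lam q)⁻¹ := by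
      have hq' : q ∈ T.erase p := mem_erase.2 ⟨Ne.symm hpq, hq⟩
      have hcompl : ({i₀, p, q} : Finset (Fin n))ᶜ = (T.erase p).erase q := by
        ext r; simp [hT]; tauto
      rw [hcompl, show n - 3 = ((T.erase p).erase q).card by
          rw [card_erase_of_mem hq', card_erase_of_mem hp]; omega,
        esym_card, prod_erase_eq_mul_inv lam hq' (hne q hq),
        prod_erase_eq_mul_inv lam hp (hne p hp)]
    rw [← hT, hσi₀, hσpq]
    field_simp [hne p hp, hne q hq]
    ring

end HessianEntries

theorem stmt12 {n : ℕ} (lam : Fin n → ℝ) (i₀ : Fin n)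
    (hΓ : ∀ m : ℕ, 1 ≤ m → m ≤ n - 1 → 0 < esym m Finset.univ lam)
    (hσ : esym (n-1) Finset.univ lam = 1)
    (h1 : lam i₀ ≤ 0) (ξ : Fin n → ℝ) :
    0 ≤ ∑ p ∈ Finset.univ \ {i₀}, ∑ q ∈ Finset.univ \ {i₀},
        (if p = q then
            2 * esym (n-2) (({i₀} : Finset (Fin n))ᶜ) lam
              + 2 * esym (n-2) (({p} : Finset (Fin n))ᶜ) lam
          else
            esym (n-2) (({i₀} : Finset (Fin n))ᶜ) lam
              + (lam p + lam q - 2 * lam i₀)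
                * esym (n-3) (({i₀, p, q} : Finset (Fin n))ᶜ) lam)
          * ξ p * ξ q := by
  change 0 ≤ ∑ p ∈ univ \ {i₀}, ∑ q ∈ univ \ {i₀}, sEntry lam i₀ p q * ξ p * ξ q
  rw [← compl_eq_univ_sdiff]
  set T : Finset (Fin n) := {i₀}ᶜ with hT
  rcases T.eq_empty_or_nonempty with hempty | hne
  · simp [hempty]
  have hpos : ∀ r ∈ T, 0 < lam r := fun r hr =>
    pos_of_ne_of_nonpos hΓ h1 (by simpa [hT] using hr)
  have hP : 0 < ∏ r ∈ T, lam r := prod_pos hpos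
  have hσT : (∏ r ∈ T, lam r) * (1 + lam i₀ * ∑ r ∈ T, (lam r)⁻¹) = 1 := by
    rw [← esym_card_insert (by simp [hT]) fun r hr => (hpos r hr).ne', hT, insert_compl_self,
      card_compl, card_singleton, Fintype.card_fin, hσ]
  have hform := muEntry_form_nonneg T ξ (fun r hr => (inv_pos.2 (hpos r hr)).le)
    (sum_pos (fun r hr => inv_pos.2 (hpos r hr)) hne)
    (pos_of_mul_pos_right (hσT ▸ one_pos) hP.le).le
  calc (0 : ℝ)
      ≤ (∏ r ∈ T, lam r)
          * ∑ p ∈ T, ∑ q ∈ T, muEntry T (fun r => (lam r)⁻¹) (lam i₀) p q * ξ p * ξ q :=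
        mul_nonneg hP.le hform
    _ = ∑ p ∈ T, ∑ q ∈ T, sEntry lam i₀ p q * ξ p * ξ q := by
        simp only [mul_sum]
        refine sum_congr rfl fun p hp => sum_congr rfl fun q hq => ?_
        rw [sEntry_eq hpos hp hq]
        ring
end
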